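/- arXiv:1306.3826 — 3 statements merged into one kernel-verified Lean document; each statement's English description precedes it below -/
import Mathlib

section
/- If a holomorphic function b on the unit disc is a multiplier of the Bloch space (i.e., b·f ∈ B(D) for all f ∈ B(D) with ‖bf‖_B ≤ C‖f‖_B), then b is bounded on the disc and satisfies sup_{z∈D}(1-|z|²)·log(2/(1-|z|²))·|b'(z)| < ∞. -/
/-!
Test the multiplier inequality at a point `w` of the disc against two functions of Bloch norm
at most a constant. The disc automorphism `φ_w(z) = (w - z) / (1 - w̄ z)` vanishes at `w` with
`(1 - |w|²) |φ_w'(w)| = 1`, so `(b φ_w)'(w) = b(w) φ_w'(w)` bounds `|b(w)|`. The function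
`g_w(z) = log 2 - log (1 - w̄ z)` has `g_w(w) = log (2 / (1 - |w|²))` and
`(1 - |w|²) |g_w'(w)| = |w|`, so `b' g_w = (b g_w)' - b g_w'` together with the boundedness of `b`
gives the logarithmic estimate for `b'`.
-/

open Complex ComplexConjugate

namespace Bloch

def NormLE (f : ℂ → ℂ) (B : ℝ) : Prop :=
  ∀ z : ℂ, ‖z‖ < 1 → ‖f 0‖ + (1 - ‖z‖ ^ 2) * ‖deriv f z‖ ≤ B

lemma one_sub_norm_le_re_one_sub_conj_mul {w : ℂ} (hw : ‖w‖ ≤ 1) (z : ℂ) :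
    1 - ‖z‖ ≤ (1 - conj w * z).re := by
  have hwz : ‖conj w * z‖ ≤ ‖z‖ := by
    rw [norm_mul, norm_conj]
    exact mul_le_of_le_one_left (norm_nonneg z) hw
  have hre : (conj w * z).re ≤ ‖conj w * z‖ := re_le_norm _
  simp only [sub_re, one_re]
  linarith

lemma re_one_sub_conj_mul_pos {w z : ℂ} (hw : ‖w‖ ≤ 1) (hz : ‖z‖ < 1) :
    0 < (1 - conj w * z).re :=
  (sub_pos.2 hz).trans_le (one_sub_norm_le_re_one_sub_conj_mul hw z)

lemma one_sub_conj_mul_ne_zero {w z : ℂ} (hw : ‖w‖ ≤ 1) (hz : ‖z‖ < 1) :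
    1 - conj w * z ≠ 0 := fun h => by
  simpa [h] using re_one_sub_conj_mul_pos hw hz

lemma one_sub_norm_le_norm_one_sub_conj_mul {w : ℂ} (hw : ‖w‖ ≤ 1) (z : ℂ) :
    1 - ‖z‖ ≤ ‖1 - conj w * z‖ :=
  (one_sub_norm_le_re_one_sub_conj_mul hw z).trans (re_le_norm _)

lemma one_sub_conj_mul_self (w : ℂ) : 1 - conj w * w = ofReal (1 - ‖w‖ ^ 2) := by
  rw [conj_mul']
  push_cast
  ring

lemma sq_norm_one_sub_conj_mul (w z : ℂ) :
    ‖1 - conj w * z‖ ^ 2 = (1 - ‖z‖ ^ 2) * (1 - ‖w‖ ^ 2) + ‖w - z‖ ^ 2 := by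
  simp only [← normSq_eq_norm_sq, normSq_apply, sub_re, sub_im, mul_re, mul_im, conj_re,
    conj_im, one_re, one_im]
  ring

section Mobius

variable {w : ℂ}

noncomputable def mobius (w z : ℂ) : ℂ := (w - z) / (1 - conj w * z)

lemma mobius_self (w : ℂ) : mobius w w = 0 := by simp [mobius]

lemma hasDerivAt_mobius {z : ℂ} (hz : 1 - conj w * z ≠ 0) :
    HasDerivAt (mobius w) ((‖w‖ ^ 2 - 1) / (1 - conj w * z) ^ 2) z := by
  have hnum : HasDerivAt (fun z => w - z) (-1) z := (hasDerivAt_id z).const_sub w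
  have hden : HasDerivAt (fun z => 1 - conj w * z) (-conj w) z := by
    simpa using ((hasDerivAt_id z).const_mul (conj w)).const_sub 1
  refine (hnum.div hden hz).congr_deriv ?_
  rw [← conj_mul']
  ring

lemma differentiableOn_mobius (hw : ‖w‖ < 1) :
    DifferentiableOn ℂ (mobius w) {z : ℂ | ‖z‖ < 1} := fun _ hz =>
  (hasDerivAt_mobius (one_sub_conj_mul_ne_zero hw.le hz)).differentiableAt.differentiableWithinAt

lemma weighted_norm_deriv_mobius {z : ℂ} (hw : ‖w‖ < 1) (hz : ‖z‖ < 1) :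
    (1 - ‖z‖ ^ 2) * ‖deriv (mobius w) z‖ =
      (1 - ‖z‖ ^ 2) * (1 - ‖w‖ ^ 2) / ‖1 - conj w * z‖ ^ 2 := by
  have hnum : ‖(‖w‖ ^ 2 - 1 : ℂ)‖ = 1 - ‖w‖ ^ 2 := by
    rw [← norm_neg, neg_sub, ← ofReal_pow, ← ofReal_one, ← ofReal_sub, norm_real,
      Real.norm_of_nonneg (by nlinarith [norm_nonneg w])]
  rw [(hasDerivAt_mobius (one_sub_conj_mul_ne_zero hw.le hz)).deriv, norm_div, norm_pow, hnum,
    mul_div_assoc]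

lemma weighted_norm_deriv_mobius_le_one {z : ℂ} (hw : ‖w‖ < 1) (hz : ‖z‖ < 1) :
    (1 - ‖z‖ ^ 2) * ‖deriv (mobius w) z‖ ≤ 1 := by
  have hpos : 0 < ‖1 - conj w * z‖ ^ 2 := by
    have := one_sub_conj_mul_ne_zero hw.le hz
    positivity
  rw [weighted_norm_deriv_mobius hw hz, div_le_one hpos, sq_norm_one_sub_conj_mul]
  nlinarith [sq_nonneg ‖w - z‖]

lemma weighted_norm_deriv_mobius_self (hw : ‖w‖ < 1) :
    (1 - ‖w‖ ^ 2) * ‖deriv (mobius w) w‖ = 1 := by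
  have hpos : 0 < 1 - ‖w‖ ^ 2 := by nlinarith [norm_nonneg w]
  rw [weighted_norm_deriv_mobius hw hw, sq_norm_one_sub_conj_mul, sub_self, norm_zero,
    zero_pow two_ne_zero, add_zero]
  field_simp

lemma normLE_mobius (hw : ‖w‖ < 1) : NormLE (mobius w) 2 := fun z hz => by
  have h0 : ‖mobius w 0‖ = ‖w‖ := by simp [mobius]
  linarith [weighted_norm_deriv_mobius_le_one hw hz]

end Mobius

section LogKernel

variable {w : ℂ}

noncomputable def logKernel (w z : ℂ) : ℂ := log 2 - log (1 - conj w * z)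

lemma hasDerivAt_logKernel {z : ℂ} (hw : ‖w‖ ≤ 1) (hz : ‖z‖ < 1) :
    HasDerivAt (logKernel w) (conj w / (1 - conj w * z)) z := by
  have hden : HasDerivAt (fun z => 1 - conj w * z) (-conj w) z := by
    simpa using ((hasDerivAt_id z).const_mul (conj w)).const_sub 1
  have hslit : 1 - conj w * z ∈ slitPlane :=
    mem_slitPlane_iff.2 (Or.inl (re_one_sub_conj_mul_pos hw hz))
  refine ((hden.clog hslit).const_sub (log 2)).congr_deriv ?_
  ring

lemma differentiableOn_logKernel (hw : ‖w‖ < 1) :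
    DifferentiableOn ℂ (logKernel w) {z : ℂ | ‖z‖ < 1} := fun _ hz =>
  (hasDerivAt_logKernel hw.le hz).differentiableAt.differentiableWithinAt

lemma norm_logKernel_self (hw : ‖w‖ < 1) :
    ‖logKernel w w‖ = Real.log (2 / (1 - ‖w‖ ^ 2)) := by
  have hpos : 0 < 1 - ‖w‖ ^ 2 := by nlinarith [norm_nonneg w]
  have hreal : logKernel w w = (Real.log (2 / (1 - ‖w‖ ^ 2)) : ℂ) := by
    rw [Real.log_div two_ne_zero hpos.ne', ofReal_sub, ofReal_log hpos.le,
      ofReal_log zero_le_two, ofReal_ofNat, logKernel, one_sub_conj_mul_self]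
  rw [hreal, norm_real, Real.norm_of_nonneg
    (Real.log_nonneg ((one_le_div hpos).2 (by nlinarith [norm_nonneg w])))]

lemma weighted_norm_deriv_logKernel_le {z : ℂ} (hw : ‖w‖ < 1) (hz : ‖z‖ < 1) :
    (1 - ‖z‖ ^ 2) * ‖deriv (logKernel w) z‖ ≤ 1 + ‖z‖ := by
  have hz' : 0 < 1 - ‖z‖ := sub_pos.2 hz
  have hderiv : ‖deriv (logKernel w) z‖ ≤ 1 / (1 - ‖z‖) := by
    rw [(hasDerivAt_logKernel hw.le hz).deriv, norm_div, norm_conj]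
    exact div_le_div₀ zero_le_one hw.le hz' (one_sub_norm_le_norm_one_sub_conj_mul hw.le z)
  calc (1 - ‖z‖ ^ 2) * ‖deriv (logKernel w) z‖
      ≤ (1 - ‖z‖ ^ 2) * (1 / (1 - ‖z‖)) :=
        mul_le_mul_of_nonneg_left hderiv (by nlinarith [norm_nonneg z])
    _ = 1 + ‖z‖ := by field_simp; ring

lemma weighted_norm_deriv_logKernel_self (hw : ‖w‖ < 1) :
    (1 - ‖w‖ ^ 2) * ‖deriv (logKernel w) w‖ = ‖w‖ := by
  have hpos : 0 < 1 - ‖w‖ ^ 2 := by nlinarith [norm_nonneg w]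
  rw [(hasDerivAt_logKernel hw.le hw).deriv, one_sub_conj_mul_self, norm_div, norm_conj,
    norm_real, Real.norm_of_nonneg hpos.le]
  field_simp

lemma normLE_logKernel (hw : ‖w‖ < 1) : NormLE (logKernel w) (Real.log 2 + 2) :=
  fun z hz => by
    have h0 : ‖logKernel w 0‖ = Real.log 2 := by
      rw [logKernel, mul_zero, sub_zero, log_one, sub_zero, ← ofReal_ofNat,
        ← ofReal_log zero_le_two, norm_real, Real.norm_of_nonneg (Real.log_nonneg one_le_two)]
    linarith [weighted_norm_deriv_logKernel_le hw hz]

end LogKernel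

lemma norm_deriv_mul_le {b f : ℂ → ℂ} {w : ℂ} (hb : DifferentiableAt ℂ b w)
    (hf : DifferentiableAt ℂ f w) :
    ‖deriv b w‖ * ‖f w‖ ≤ ‖deriv (b * f) w‖ + ‖b w‖ * ‖deriv f w‖ := by
  have hprod : deriv (b * f) w = deriv b w * f w + b w * deriv f w := deriv_mul hb hf
  rw [← norm_mul, ← norm_mul, hprod]
  simpa using norm_sub_le (deriv b w * f w + b w * deriv f w) (b w * deriv f w)

def IsMultiplierWith (b : ℂ → ℂ) (C : ℝ) : Prop :=
  ∀ f : ℂ → ℂ, DifferentiableOn ℂ f {z : ℂ | ‖z‖ < 1} →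
    ∀ B : ℝ, NormLE f B → NormLE (b * f) (C * B)

lemma disc_mem_nhds {w : ℂ} (hw : ‖w‖ < 1) : {z : ℂ | ‖z‖ < 1} ∈ nhds w :=
  (isOpen_lt continuous_norm continuous_const).mem_nhds hw

namespace IsMultiplierWith

variable {b : ℂ → ℂ} {C : ℝ} {w : ℂ}

lemma weighted_norm_deriv_mul_le (hmul : IsMultiplierWith b C) {f : ℂ → ℂ}
    (hf : DifferentiableOn ℂ f {z : ℂ | ‖z‖ < 1}) {B : ℝ} (hB : NormLE f B)
    (hw : ‖w‖ < 1) : (1 - ‖w‖ ^ 2) * ‖deriv (b * f) w‖ ≤ C * B :=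
  (le_add_of_nonneg_left (norm_nonneg _)).trans (hmul f hf B hB w hw)

lemma norm_le (hmul : IsMultiplierWith b C) (hb : DifferentiableOn ℂ b {z : ℂ | ‖z‖ < 1})
    (hw : ‖w‖ < 1) : ‖b w‖ ≤ C * 2 := by
  have hφ := (differentiableOn_mobius hw).differentiableAt (disc_mem_nhds hw)
  have hprod : deriv (b * mobius w) w = b w * deriv (mobius w) w := by
    rw [deriv_mul (hb.differentiableAt (disc_mem_nhds hw)) hφ, mobius_self, mul_zero, zero_add]
  have h := hmul.weighted_norm_deriv_mul_le (differentiableOn_mobius hw) (normLE_mobius hw) hw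
  rwa [hprod, norm_mul, mul_left_comm, weighted_norm_deriv_mobius_self hw, mul_one] at h

lemma weighted_log_norm_deriv_le (hmul : IsMultiplierWith b C)
    (hb : DifferentiableOn ℂ b {z : ℂ | ‖z‖ < 1}) (hw : ‖w‖ < 1) :
    (1 - ‖w‖ ^ 2) * Real.log (2 / (1 - ‖w‖ ^ 2)) * ‖deriv b w‖ ≤
      C * (Real.log 2 + 2) + C * 2 := by
  have hg := (hasDerivAt_logKernel hw.le hw).differentiableAt
  have hρ : 0 ≤ 1 - ‖w‖ ^ 2 := by nlinarith [norm_nonneg w]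
  have hbg := hmul.weighted_norm_deriv_mul_le (differentiableOn_logKernel hw)
    (normLE_logKernel hw) hw
  have hbg' : ‖b w‖ * ((1 - ‖w‖ ^ 2) * ‖deriv (logKernel w) w‖) ≤ C * 2 := by
    rw [weighted_norm_deriv_logKernel_self hw]
    nlinarith [hmul.norm_le hb hw, norm_nonneg (b w), norm_nonneg w]
  calc (1 - ‖w‖ ^ 2) * Real.log (2 / (1 - ‖w‖ ^ 2)) * ‖deriv b w‖
      = (1 - ‖w‖ ^ 2) * (‖deriv b w‖ * ‖logKernel w w‖) := by
        rw [norm_logKernel_self hw]; ring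
    _ ≤ (1 - ‖w‖ ^ 2) * (‖deriv (b * logKernel w) w‖ + ‖b w‖ * ‖deriv (logKernel w) w‖) :=
        mul_le_mul_of_nonneg_left
          (norm_deriv_mul_le (hb.differentiableAt (disc_mem_nhds hw)) hg) hρ
    _ = (1 - ‖w‖ ^ 2) * ‖deriv (b * logKernel w) w‖ +
          ‖b w‖ * ((1 - ‖w‖ ^ 2) * ‖deriv (logKernel w) w‖) := by ring
    _ ≤ C * (Real.log 2 + 2) + C * 2 := add_le_add hbg hbg'

end IsMultiplierWith

end Bloch

open Bloch

/-- Necessity: a multiplier `b` of the Bloch space of the disc is bounded and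
satisfies the logarithmic Bloch condition. -/
theorem bloch_multiplier_necessity (b : ℂ → ℂ)
    (hb : DifferentiableOn ℂ b {z : ℂ | ‖z‖ < 1})
    (C : ℝ)
    (hmul : ∀ f : ℂ → ℂ, DifferentiableOn ℂ f {z : ℂ | ‖z‖ < 1} →
      ∀ B : ℝ,
        (∀ z : ℂ, ‖z‖ < 1 →
          ‖f 0‖ + (1 - ‖z‖ ^ 2) * ‖deriv f z‖ ≤ B) →
        ∀ z : ℂ, ‖z‖ < 1 →
          ‖(b * f) 0‖ + (1 - ‖z‖ ^ 2) * ‖deriv (b * f) z‖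
            ≤ C * B) :
    (∃ M : ℝ, ∀ z : ℂ, ‖z‖ < 1 → ‖b z‖ ≤ M) ∧
    (∃ M : ℝ, ∀ z : ℂ, ‖z‖ < 1 →
      (1 - ‖z‖ ^ 2) * Real.log (2 / (1 - ‖z‖ ^ 2)) *
        ‖deriv b z‖ ≤ M) := by
  have hmul' : IsMultiplierWith b C := hmul
  exact ⟨⟨C * 2, fun w hw => hmul'.norm_le hb hw⟩,
    ⟨C * (Real.log 2 + 2) + C * 2, fun w hw => hmul'.weighted_log_norm_deriv_le hb hw⟩⟩
end

section
/- If b is a bounded holomorphic function on the unit disc satisfying sup_{z∈D}(1-|z|²)·log(2/(1-|z|²))·|b'(z)| < ∞, then b is a multiplier of the Bloch space: for every f ∈ B(D), the product bf belongs to B(D) with ‖bf‖_B ≤ C(‖b‖_∞ + ‖b‖_{B_L})‖f‖_B for a universal constant C. -/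
/-!
Along the radius `t ↦ t z` the Bloch condition gives `‖f'(t z)‖ ‖z‖ ≤ B ‖z‖ / (1 - t ‖z‖)`, so
comparison with `-B log (1 - t ‖z‖)` yields the growth `‖f z‖ ≤ ‖f 0‖ + B log (2 / (1 - ‖z‖²))`.
In `(b f)' = b' f + b f'` this logarithmic growth of `f` is exactly compensated by the logarithmic
weight in the hypothesis on `b'`, while `b f'` is controlled by `‖b‖_∞`.
-/

open Real Set

lemma log_two_le_log_two_div_one_sub_sq {r : ℝ} (hr0 : 0 ≤ r) (hr1 : r < 1) :
    log 2 ≤ log (2 / (1 - r ^ 2)) := by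
  have h : 0 < 1 - r ^ 2 := by nlinarith
  apply log_le_log two_pos
  rw [le_div_iff₀ h]
  nlinarith

lemma neg_log_one_sub_le_log_two_div_one_sub_sq {r : ℝ} (hr0 : 0 ≤ r) (hr1 : r < 1) :
    -log (1 - r) ≤ log (2 / (1 - r ^ 2)) := by
  have h : 0 < 1 - r ^ 2 := by nlinarith
  rw [← log_inv]
  apply log_le_log (inv_pos.mpr (by linarith))
  rw [inv_eq_one_div, div_le_div_iff₀ (by linarith) h]
  nlinarith

section BlochGrowth

variable {E : Type*} [NormedAddCommGroup E] [NormedSpace ℂ E] {f : ℂ → E} {B : ℝ}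

lemma DifferentiableOn.differentiableAt_of_norm_lt_one
    (hf : DifferentiableOn ℂ f {w : ℂ | ‖w‖ < 1}) {z : ℂ} (hz : ‖z‖ < 1) :
    DifferentiableAt ℂ f z :=
  hf.differentiableAt ((isOpen_lt continuous_norm continuous_const).mem_nhds hz)

lemma hasDerivAt_comp_ofReal_mul {z : ℂ} (hf : DifferentiableOn ℂ f {w : ℂ | ‖w‖ < 1})
    {t : ℝ} (ht : ‖(t : ℂ) * z‖ < 1) :
    HasDerivAt (fun s : ℝ => f (s * z)) (z • deriv f (t * z)) t := by
  have hlin : HasDerivAt (fun s : ℝ => (s : ℂ) * z) z t := by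
    simpa using (Complex.ofRealCLM.hasDerivAt (x := t)).mul_const z
  exact (hf.differentiableAt_of_norm_lt_one ht).hasDerivAt.scomp t hlin

theorem norm_sub_le_neg_log_of_bloch (hf : DifferentiableOn ℂ f {w : ℂ | ‖w‖ < 1})
    (hB : ∀ w : ℂ, ‖w‖ < 1 → (1 - ‖w‖ ^ 2) * ‖deriv f w‖ ≤ B) {z : ℂ} (hz : ‖z‖ < 1) :
    ‖f z - f 0‖ ≤ -B * log (1 - ‖z‖) := by
  set r := ‖z‖ with hr
  have hr0 : 0 ≤ r := norm_nonneg z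
  have hB0 : 0 ≤ B := le_trans (by simp) (hB 0 (by simp))
  have hnorm : ∀ t ∈ Icc (0 : ℝ) 1, ‖(t : ℂ) * z‖ = t * r := fun t ht => by
    simp [Complex.norm_real, abs_of_nonneg ht.1, hr]
  have hpos : ∀ t ∈ Icc (0 : ℝ) 1, 0 < 1 - t * r := fun t ht => by nlinarith [ht.2]
  have hmem : ∀ t ∈ Icc (0 : ℝ) 1, ‖(t : ℂ) * z‖ < 1 := fun t ht => by
    linarith [hnorm t ht, hpos t ht]
  have hderiv : ∀ t ∈ Icc (0 : ℝ) 1,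
      HasDerivAt (fun s : ℝ => f (s * z) - f 0) (z • deriv f (t * z)) t := fun t ht =>
    (hasDerivAt_comp_ofReal_mul hf (hmem t ht)).sub_const (f 0)
  have hbound : ∀ t ∈ Icc (0 : ℝ) 1,
      HasDerivAt (fun s : ℝ => -B * log (1 - s * r)) (-B * (-r / (1 - t * r))) t := by
    intro t ht
    have h : HasDerivAt (fun s : ℝ => 1 - s * r) (-r) t := by
      simpa using ((hasDerivAt_id t).mul_const r).const_sub 1
    exact (h.log (hpos t ht).ne').const_mul (-B)
  have hslope : ∀ t ∈ Icc (0 : ℝ) 1, ‖z • deriv f (t * z)‖ ≤ -B * (-r / (1 - t * r)) := by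
    intro t ht
    have hw := hB _ (hmem t ht)
    rw [hnorm t ht] at hw
    have h1 := hpos t ht
    have h2 : 0 ≤ t * r := mul_nonneg ht.1 hr0
    rw [norm_smul, ← hr, show -B * (-r / (1 - t * r)) = r * B / (1 - t * r) by ring,
      le_div_iff₀ h1]
    -- `1 - t r ≤ 1 - (t r)²`, and the Bloch bound holds with the latter weight
    nlinarith [mul_nonneg hr0 (norm_nonneg (deriv f (t * z))), mul_nonneg hr0 hB0]
  simpa using image_norm_le_of_norm_deriv_right_le_deriv_boundary'
    (fun t ht => (hderiv t ht).continuousAt.continuousWithinAt)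
    (fun t ht => (hderiv t (Ico_subset_Icc_self ht)).hasDerivWithinAt)
    (by simp) (fun t ht => (hbound t ht).continuousAt.continuousWithinAt)
    (fun t ht => (hbound t (Ico_subset_Icc_self ht)).hasDerivWithinAt)
    (fun t ht => hslope t (Ico_subset_Icc_self ht)) (right_mem_Icc.mpr zero_le_one)

theorem norm_le_three_mul_log_of_bloch (hf : DifferentiableOn ℂ f {w : ℂ | ‖w‖ < 1})
    (hf0 : ‖f 0‖ ≤ B) (hB : ∀ w : ℂ, ‖w‖ < 1 → (1 - ‖w‖ ^ 2) * ‖deriv f w‖ ≤ B)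
    {z : ℂ} (hz : ‖z‖ < 1) :
    ‖f z‖ ≤ 3 * B * log (2 / (1 - ‖z‖ ^ 2)) := by
  have hB0 : 0 ≤ B := (norm_nonneg _).trans hf0
  have hgrowth := norm_sub_le_neg_log_of_bloch hf hB hz
  have hlog := neg_log_one_sub_le_log_two_div_one_sub_sq (norm_nonneg z) hz
  have hlog2 := log_two_le_log_two_div_one_sub_sq (norm_nonneg z) hz
  have := log_two_gt_d9
  calc ‖f z‖ ≤ ‖f z - f 0‖ + ‖f 0‖ := norm_le_norm_sub_add _ _
    _ ≤ 3 * B * log (2 / (1 - ‖z‖ ^ 2)) := by nlinarith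

end BlochGrowth

lemma mul_norm_deriv_mul_le {𝕜 𝔸 : Type*} [NontriviallyNormedField 𝕜] [NormedRing 𝔸]
    [NormedAlgebra 𝕜 𝔸] {c d : 𝕜 → 𝔸} {x : 𝕜} (hc : DifferentiableAt 𝕜 c x)
    (hd : DifferentiableAt 𝕜 d x) {w : ℝ} (hw : 0 ≤ w) :
    w * ‖deriv (c * d) x‖ ≤ w * ‖deriv c x‖ * ‖d x‖ + ‖c x‖ * (w * ‖deriv d x‖) := by
  rw [deriv_mul hc hd]
  calc w * ‖deriv c x * d x + c x * deriv d x‖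
      ≤ w * (‖deriv c x‖ * ‖d x‖ + ‖c x‖ * ‖deriv d x‖) := by
        gcongr
        exact norm_add_le_of_le (norm_mul_le _ _) (norm_mul_le _ _)
    _ = w * ‖deriv c x‖ * ‖d x‖ + ‖c x‖ * (w * ‖deriv d x‖) := by ring

/-- Sufficiency: if `b ∈ H^∞(D) ∩ B_L(D)` then `b` multiplies the Bloch space,
with `‖bf‖_B ≤ C(‖b‖_∞ + ‖b‖_{B_L})‖f‖_B`. -/
theorem bloch_multiplier_sufficiency :
    ∃ C : ℝ, 0 < C ∧
      ∀ (b f : ℂ → ℂ) (Mb ML B : ℝ),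
        DifferentiableOn ℂ b {z : ℂ | ‖z‖ < 1} →
        DifferentiableOn ℂ f {z : ℂ | ‖z‖ < 1} →
        (∀ z : ℂ, ‖z‖ < 1 → ‖b z‖ ≤ Mb) →
        (∀ z : ℂ, ‖z‖ < 1 →
          ‖b 0‖ +
            (1 - ‖z‖ ^ 2) * Real.log (2 / (1 - ‖z‖ ^ 2)) *
              ‖deriv b z‖ ≤ ML) →
        (∀ z : ℂ, ‖z‖ < 1 →
          ‖f 0‖ + (1 - ‖z‖ ^ 2) * ‖deriv f z‖ ≤ B) →
        ∀ z : ℂ, ‖z‖ < 1 →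
          ‖(b * f) 0‖ + (1 - ‖z‖ ^ 2) * ‖deriv (b * f) z‖
            ≤ C * (Mb + ML) * B := by
  refine ⟨4, four_pos, fun b f Mb ML B hb hf hMb hML hB z hz => ?_⟩
  have hf' : ∀ w : ℂ, ‖w‖ < 1 → (1 - ‖w‖ ^ 2) * ‖deriv f w‖ ≤ B := fun w hw => by
    linarith [hB w hw, norm_nonneg (f 0)]
  have hf0 : ‖f 0‖ ≤ B := le_trans (le_add_of_nonneg_right (by simp)) (hB 0 (by simp))
  have hb' : (1 - ‖z‖ ^ 2) * log (2 / (1 - ‖z‖ ^ 2)) * ‖deriv b z‖ ≤ ML := by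
    linarith [hML z hz, norm_nonneg (b 0)]
  have hML0 : 0 ≤ ML := le_trans (by norm_num; positivity) (hML 0 (by simp))
  have hMb0 : 0 ≤ Mb := (norm_nonneg _).trans (hMb 0 (by simp))
  have hB0 : 0 ≤ B := (norm_nonneg _).trans hf0
  have hw : 0 ≤ 1 - ‖z‖ ^ 2 := by nlinarith [norm_nonneg z]
  have hbf := mul_norm_deriv_mul_le (hb.differentiableAt_of_norm_lt_one hz)
    (hf.differentiableAt_of_norm_lt_one hz) hw
  have hbf' : (1 - ‖z‖ ^ 2) * ‖deriv b z‖ * ‖f z‖ ≤ 3 * ML * B :=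
    calc (1 - ‖z‖ ^ 2) * ‖deriv b z‖ * ‖f z‖
        ≤ (1 - ‖z‖ ^ 2) * ‖deriv b z‖ * (3 * B * log (2 / (1 - ‖z‖ ^ 2))) := by
          gcongr
          exact norm_le_three_mul_log_of_bloch hf hf0 hf' hz
      _ = 3 * B * ((1 - ‖z‖ ^ 2) * log (2 / (1 - ‖z‖ ^ 2)) * ‖deriv b z‖) := by ring
      _ ≤ 3 * ML * B := by nlinarith
  have hb'f : ‖b z‖ * ((1 - ‖z‖ ^ 2) * ‖deriv f z‖) ≤ Mb * B :=
    mul_le_mul (hMb z hz) (hf' z hz) (by positivity) hMb0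
  have hbf0 : ‖(b * f) 0‖ ≤ Mb * B := by
    rw [Pi.mul_apply, norm_mul]
    exact mul_le_mul (hMb 0 (by simp)) hf0 (norm_nonneg _) hMb0
  nlinarith [mul_nonneg hMb0 hB0, mul_nonneg hML0 hB0]
end

section
/- Let J = {j_1,…,j_l} be a nonempty subset of {1,…,n}. For every f in the sum Bloch space 𝔹(D^n) and every z ∈ D^n, (∏_{k∈J}(1-|z_k|²))·|∂^l f/∂z_{j_1}⋯∂z_{j_l}(z)| ≤ C‖f‖_𝔹 for a constant C independent of f and z. -/
/-- The open unit polydisc in `ℂⁿ`. -/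
def polydisc (n : ℕ) : Set (Fin n → ℂ) := {z | ∀ j, ‖z j‖ < 1}

/-- Partial (complex) derivative in the `j`-th variable. -/
noncomputable def pderivAt (n : ℕ) (j : Fin n) (f : (Fin n → ℂ) → ℂ) :
    (Fin n → ℂ) → ℂ :=
  fun z => deriv (fun w : ℂ => f (Function.update z j w)) (z j)

/-- Iterated mixed partial derivative, once in each variable of the list. -/
noncomputable def mderiv (n : ℕ) : List (Fin n) → ((Fin n → ℂ) → ℂ) → ((Fin n → ℂ) → ℂ)
  | [], f => f
  | j :: l, f => pderivAt n j (mderiv n l f)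

/-- The product-Bloch quantity `|f(0)| + ∏ⱼ(1-|zⱼ|²)·|∂ⁿf/∂z₁⋯∂zₙ(z)|`. -/
noncomputable def prodBlochExpr (n : ℕ) (f : (Fin n → ℂ) → ℂ) (z : Fin n → ℂ) : ℝ :=
  ‖f 0‖ +
    (∏ j, (1 - ‖z j‖ ^ 2)) * ‖mderiv n (List.finRange n) f z‖

/-- The sum-Bloch quantity `|f(0)| + Σⱼ(1-|zⱼ|²)·|∂f/∂zⱼ(z)|`. -/
noncomputable def sumBlochExpr (n : ℕ) (f : (Fin n → ℂ) → ℂ) (z : Fin n → ℂ) : ℝ :=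
  ‖f 0‖ +
    ∑ j, (1 - ‖z j‖ ^ 2) * ‖pderivAt n j f z‖

/-
Each partial derivative is controlled by the Cauchy estimate on the largest disc that stays in
the polydisc: at `z`, differentiating once more in a variable `j` not yet used costs a factor
`2 / (1 - |z_j|)`, which the new weight `1 - |z_j|²` absorbs up to the constant `4`, while the
weights of the variables already used do not change along the `j`-slice. Iterating from a single
`(1 - |z_j|²) |∂_j f| ≤ ‖f‖_𝔹` gives the estimate with `C = 4 ^ (|J| - 1)`.

To iterate, the intermediate derivatives must be holomorphic in each variable separately. This is
preserved in the presence of local bounds: by the Schwarz lemma applied to the slope, the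
difference quotients in the variable `i` converge to `∂_i g` uniformly in the other variables, so
the limit is again holomorphic in each of them.
-/

open Metric Set Function Filter Topology

section OneVariable

variable {G : ℂ → ℂ} {c ξ : ℂ} {R A : ℝ}

lemma mapsTo_closedBall_of_norm_le {α E : Type*} [SeminormedAddCommGroup E] {g : α → E}
    {s : Set α} {a : α} (hA : ∀ x ∈ s, ‖g x‖ ≤ A) (ha : a ∈ s) :
    MapsTo g s (closedBall (g a) (2 * A)) := fun x hx => by
  rw [mem_closedBall, dist_eq_norm]
  linarith [norm_sub_le (g x) (g a), hA x hx, hA a ha]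

lemma norm_dslope_le_of_norm_le (hG : DifferentiableOn ℂ G (ball c R))
    (hA : ∀ ξ ∈ ball c R, ‖G ξ‖ ≤ A) (hξ : ξ ∈ ball c R) : ‖dslope G c ξ‖ ≤ 2 * A / R :=
  Complex.norm_dslope_le_div_of_mapsTo_ball hG
    (mapsTo_closedBall_of_norm_le hA (mem_ball_self (pos_of_mem_ball hξ))) hξ

lemma norm_deriv_le_of_norm_le (hG : DifferentiableOn ℂ G (ball c R))
    (hA : ∀ ξ ∈ ball c R, ‖G ξ‖ ≤ A) (hR : 0 < R) : ‖deriv G c‖ ≤ 2 * A / R := by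
  simpa using norm_dslope_le_of_norm_le hG hA (mem_ball_self hR)

lemma norm_dslope_sub_deriv_le (hG : DifferentiableOn ℂ G (ball c R))
    (hA : ∀ ξ ∈ ball c R, ‖G ξ‖ ≤ A) (hξ : ξ ∈ ball c R) :
    ‖dslope G c ξ - deriv G c‖ ≤ 4 * A / R ^ 2 * ‖ξ - c‖ := by
  have hR : 0 < R := pos_of_mem_ball hξ
  have hd : DifferentiableOn ℂ (dslope G c) (ball c R) :=
    (Complex.differentiableOn_dslope (ball_mem_nhds c hR)).2 hG
  have hmaps : MapsTo (dslope G c) (ball c R) (closedBall (dslope G c c) (2 * (2 * A / R))) :=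
    mapsTo_closedBall_of_norm_le (fun _ hζ => norm_dslope_le_of_norm_le hG hA hζ)
      (mem_ball_self hR)
  have := Complex.dist_le_div_mul_dist_of_mapsTo_ball hd hmaps hξ
  rw [dslope_same, dist_eq_norm, dist_eq_norm] at this
  exact this.trans_eq (by field_simp; ring)

theorem differentiableOn_deriv_of_separately {F : ℂ → ℂ → ℂ} {U : Set ℂ} (hU : IsOpen U)
    (hF₁ : ∀ w ∈ U, DifferentiableOn ℂ (F w) (ball c R))
    (hF₂ : ∀ ξ ∈ ball c R, DifferentiableOn ℂ (fun w => F w ξ) U)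
    (hA : ∀ w ∈ U, ∀ ξ ∈ ball c R, ‖F w ξ‖ ≤ A) (hR : 0 < R) :
    DifferentiableOn ℂ (fun w => deriv (F w) c) U := by
  have hsmall : ∀ ε > 0, ∀ᶠ ξ in 𝓝 c, 4 * A / R ^ 2 * ‖ξ - c‖ < ε := fun ε hε =>
    (Continuous.tendsto' (by fun_prop) c 0 (by simp)).eventually (gt_mem_nhds hε)
  have hunif : TendstoUniformlyOn (fun ξ w => dslope (F w) c ξ) (fun w => deriv (F w) c)
      (𝓝[≠] c) U := by
    refine Metric.tendstoUniformlyOn_iff.2 fun ε hε => ?_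
    filter_upwards [nhdsWithin_le_nhds (ball_mem_nhds c hR), nhdsWithin_le_nhds (hsmall ε hε)]
      with ξ hξ hlt w hw
    rw [dist_comm, dist_eq_norm]
    exact (norm_dslope_sub_deriv_le (hF₁ w hw) (hA w hw) hξ).trans_lt hlt
  refine hunif.tendstoLocallyUniformlyOn.differentiableOn ?_ hU
  filter_upwards [self_mem_nhdsWithin, nhdsWithin_le_nhds (ball_mem_nhds c hR)]
    with ξ (hne : ξ ≠ c) hξ
  simp only [dslope_of_ne _ hne, slope_def_module]
  exact ((hF₂ ξ hξ).sub (hF₂ c (mem_ball_self hR))).const_smul (ξ - c)⁻¹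

end OneVariable

section SeveralVariables

variable {n : ℕ} {U : Set (Fin n → ℂ)} {g : (Fin n → ℂ) → ℂ}

def SeparatelyHolomorphicOn (U : Set (Fin n → ℂ)) (g : (Fin n → ℂ) → ℂ) : Prop :=
  ∀ z ∈ U, ∀ j, DifferentiableAt ℂ (fun w => g (update z j w)) (z j)

def LocallyBoundedOn (U : Set (Fin n → ℂ)) (g : (Fin n → ℂ) → ℂ) : Prop :=
  ∀ z ∈ U, ∃ r > 0, ∃ A, ∀ y ∈ ball z r, ‖g y‖ ≤ A

lemma update_mem_ball {z y : Fin n → ℂ} {r : ℝ} {i : Fin n} {ξ : ℂ} (hy : y ∈ ball z r)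
    (hξ : ξ ∈ ball (z i) r) : update y i ξ ∈ ball z r := by
  rw [mem_ball, dist_pi_lt_iff (pos_of_mem_ball hy)]
  intro k
  rcases eq_or_ne k i with rfl | hk
  · simpa using hξ
  · simpa [hk] using (dist_le_pi_dist y z k).trans_lt hy

lemma DifferentiableOn.separatelyHolomorphicOn (hg : DifferentiableOn ℂ g U) (hU : IsOpen U) :
    SeparatelyHolomorphicOn U g := fun z hz j => by
  have hz' : update z j (z j) ∈ U := by rwa [update_eq_self]
  exact (hg.differentiableAt (hU.mem_nhds hz')).comp (z j) (hasFDerivAt_update z (z j)).differentiableAt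

lemma ContinuousOn.locallyBoundedOn (hg : ContinuousOn g U) (hU : IsOpen U) :
    LocallyBoundedOn U g := fun z hz => by
  obtain ⟨r, hr, hclose⟩ := Metric.continuousAt_iff.1 (hg.continuousAt (hU.mem_nhds hz)) 1 one_pos
  refine ⟨r, hr, ‖g z‖ + 1, fun y hy => ?_⟩
  have := hclose (mem_ball.1 hy)
  rw [dist_eq_norm] at this
  linarith [norm_le_norm_add_norm_sub' (g y) (g z)]

lemma LocallyBoundedOn.exists_ball_subset (hb : LocallyBoundedOn U g) (hU : IsOpen U)
    {z : Fin n → ℂ} (hz : z ∈ U) : ∃ r > 0, ball z r ⊆ U ∧ ∃ A, ∀ y ∈ ball z r, ‖g y‖ ≤ A := by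
  obtain ⟨r, hr, A, hA⟩ := hb z hz
  obtain ⟨s, hs, hsU⟩ := Metric.isOpen_iff.1 hU z hz
  exact ⟨min r s, lt_min hr hs, (ball_subset_ball (min_le_right r s)).trans hsU, A,
    fun y hy => hA y (ball_subset_ball (min_le_left r s) hy)⟩

lemma SeparatelyHolomorphicOn.differentiableOn_slice (hg : SeparatelyHolomorphicOn U g)
    {z : Fin n → ℂ} {j : Fin n} {V : Set ℂ} (hV : ∀ ξ ∈ V, update z j ξ ∈ U) :
    DifferentiableOn ℂ (fun ξ => g (update z j ξ)) V := fun ξ hξ => by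
  simpa using (hg _ (hV ξ hξ) j).differentiableWithinAt (s := V)

lemma LocallyBoundedOn.pderiv (hb : LocallyBoundedOn U g) (hU : IsOpen U)
    (hg : SeparatelyHolomorphicOn U g) (i : Fin n) : LocallyBoundedOn U (pderivAt n i g) := by
  intro z hz
  obtain ⟨r, hr, hrU, A, hA⟩ := hb.exists_ball_subset hU hz
  refine ⟨r / 2, by positivity, 2 * A / (r / 2), fun y hy => ?_⟩
  have hslice : ∀ ξ ∈ ball (y i) (r / 2), update y i ξ ∈ ball z r := fun ξ hξ =>
    update_mem_ball (ball_subset_ball (by linarith) hy) (mem_ball.2 (by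
      linarith [dist_triangle ξ (y i) (z i), dist_le_pi_dist y z i, mem_ball.1 hy, mem_ball.1 hξ]))
  exact norm_deriv_le_of_norm_le (hg.differentiableOn_slice fun ξ hξ => hrU (hslice ξ hξ))
    (fun ξ hξ => hA _ (hslice ξ hξ)) (by positivity)

lemma SeparatelyHolomorphicOn.pderiv (hg : SeparatelyHolomorphicOn U g) (hU : IsOpen U)
    (hb : LocallyBoundedOn U g) (i : Fin n) : SeparatelyHolomorphicOn U (pderivAt n i g) := by
  intro z hz j
  obtain ⟨r, hr, hrU, A, hA⟩ := hb.exists_ball_subset hU hz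
  have hmem {w ξ : ℂ} {k l : Fin n} (hw : w ∈ ball (z k) r) (hξ : ξ ∈ ball (z l) r) :
      update (update z k w) l ξ ∈ U :=
    hrU (update_mem_ball (update_mem_ball (mem_ball_self hr) hw) hξ)
  rcases eq_or_ne j i with rfl | hji
  · have hslice : DifferentiableOn ℂ (fun ξ => g (update z j ξ)) (ball (z j) r) :=
      hg.differentiableOn_slice fun ξ hξ => hrU (update_mem_ball (mem_ball_self hr) hξ)
    have heq : (fun w => pderivAt n j g (update z j w)) = deriv (fun ξ => g (update z j ξ)) := by
      funext w
      simp [pderivAt]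
    rw [heq]
    exact (hslice.analyticAt (ball_mem_nhds _ hr)).deriv.differentiableAt
  · have heq : (fun w => pderivAt n i g (update z j w)) =
        fun w => deriv (fun ξ => g (update (update z j w) i ξ)) (z i) := by
      funext w
      simp [pderivAt, update_of_ne hji.symm]
    rw [heq]
    refine (differentiableOn_deriv_of_separately isOpen_ball (fun w hw => ?_) (fun ξ hξ => ?_)
      (fun w hw ξ hξ => hA _ (update_mem_ball (update_mem_ball (mem_ball_self hr) hw) hξ)) hr
      ).differentiableAt (ball_mem_nhds _ hr)
    · exact hg.differentiableOn_slice fun ξ hξ => hmem hw hξ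
    · simp_rw [update_comm hji]
      exact hg.differentiableOn_slice fun w hw => hmem hξ hw

lemma separatelyHolomorphicOn_and_locallyBoundedOn_mderiv (hU : IsOpen U)
    (hg : SeparatelyHolomorphicOn U g) (hb : LocallyBoundedOn U g) :
    ∀ L : List (Fin n),
      SeparatelyHolomorphicOn U (mderiv n L g) ∧ LocallyBoundedOn U (mderiv n L g)
  | [] => ⟨hg, hb⟩
  | i :: L =>
    have ⟨hgL, hbL⟩ := separatelyHolomorphicOn_and_locallyBoundedOn_mderiv hU hg hb L
    ⟨hgL.pderiv hU hbL i, hbL.pderiv hU hgL i⟩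

end SeveralVariables

section Polydisc

variable {n : ℕ} {g : (Fin n → ℂ) → ℂ} {z : Fin n → ℂ}

lemma polydisc_eq_ball (n : ℕ) : polydisc n = ball 0 1 := by
  ext z
  simp [polydisc, pi_norm_lt_iff]

lemma isOpen_polydisc (n : ℕ) : IsOpen (polydisc n) :=
  polydisc_eq_ball n ▸ isOpen_ball

lemma update_mem_polydisc (hz : z ∈ polydisc n) (j : Fin n) {ξ : ℂ} (hξ : ‖ξ‖ < 1) :
    update z j ξ ∈ polydisc n := fun k => by
  rcases eq_or_ne k j with rfl | hk
  · simpa using hξ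
  · simpa [hk] using hz k

noncomputable def polydiscWeight (L : List (Fin n)) (z : Fin n → ℂ) : ℝ :=
  (L.map fun k => 1 - ‖z k‖ ^ 2).prod

lemma one_sub_norm_sq_pos_of_mem_polydisc (hz : z ∈ polydisc n) (k : Fin n) :
    0 < 1 - ‖z k‖ ^ 2 := by
  nlinarith [hz k, norm_nonneg (z k)]

lemma polydiscWeight_pos (hz : z ∈ polydisc n) (L : List (Fin n)) : 0 < polydiscWeight L z :=
  List.prod_pos fun _ ha => by
    obtain ⟨k, -, rfl⟩ := List.mem_map.1 ha
    exact one_sub_norm_sq_pos_of_mem_polydisc hz k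

lemma polydiscWeight_update {L : List (Fin n)} {j : Fin n} (hj : j ∉ L) (z : Fin n → ℂ) (ξ : ℂ) :
    polydiscWeight L (update z j ξ) = polydiscWeight L z := by
  refine congrArg List.prod (List.map_congr_left fun k hk => ?_)
  rw [update_of_ne (ne_of_mem_of_not_mem hk hj)]

lemma weight_mul_norm_pderivAt_le (hg : SeparatelyHolomorphicOn (polydisc n) g)
    {L : List (Fin n)} {j : Fin n} (hj : j ∉ L) {M : ℝ}
    (hM : ∀ y ∈ polydisc n, polydiscWeight L y * ‖g y‖ ≤ M) (hz : z ∈ polydisc n) :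
    polydiscWeight (j :: L) z * ‖pderivAt n j g z‖ ≤ 4 * M := by
  set Q := polydiscWeight L z
  have hQ : 0 < Q := polydiscWeight_pos hz L
  have hzj : ‖z j‖ < 1 := hz j
  have hM0 : 0 ≤ M := (by positivity : 0 ≤ Q * ‖g z‖).trans (hM z hz)
  have hslice : ∀ ξ ∈ ball (z j) (1 - ‖z j‖), update z j ξ ∈ polydisc n := fun ξ hξ =>
    update_mem_polydisc hz j (by
      linarith [norm_le_norm_add_norm_sub' ξ (z j), mem_ball_iff_norm.1 hξ])
  have hderiv : ‖pderivAt n j g z‖ ≤ 2 * (M / Q) / (1 - ‖z j‖) := by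
    refine norm_deriv_le_of_norm_le (hg.differentiableOn_slice hslice) (fun ξ hξ => ?_)
      (by linarith)
    have := hM _ (hslice ξ hξ)
    rwa [polydiscWeight_update hj, mul_comm, ← le_div_iff₀ hQ] at this
  calc polydiscWeight (j :: L) z * ‖pderivAt n j g z‖
      = (1 - ‖z j‖ ^ 2) * Q * ‖pderivAt n j g z‖ := by simp [polydiscWeight, Q]
    _ ≤ (1 - ‖z j‖ ^ 2) * Q * (2 * (M / Q) / (1 - ‖z j‖)) := by
        have := one_sub_norm_sq_pos_of_mem_polydisc hz j
        gcongr
    _ = 2 * (1 + ‖z j‖) * M := by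
        field_simp [(by linarith : 1 - ‖z j‖ ≠ 0)]
        ring
    _ ≤ 4 * M := by nlinarith

lemma weight_mul_norm_mderiv_le (hg : SeparatelyHolomorphicOn (polydisc n) g)
    (hb : LocallyBoundedOn (polydisc n) g) {M : ℝ}
    (hM : ∀ j, ∀ y ∈ polydisc n, (1 - ‖y j‖ ^ 2) * ‖pderivAt n j g y‖ ≤ M) :
    ∀ (i : Fin n) (L : List (Fin n)), (i :: L).Nodup → ∀ z ∈ polydisc n,
      polydiscWeight (i :: L) z * ‖mderiv n (i :: L) g z‖ ≤ 4 ^ L.length * M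
  | i, [], _, z, hz => by simpa [polydiscWeight, mderiv] using hM i z hz
  | i, j :: L, hnd, z, hz => by
    rw [List.length_cons, pow_succ', mul_assoc]
    exact weight_mul_norm_pderivAt_le
      (separatelyHolomorphicOn_and_locallyBoundedOn_mderiv (isOpen_polydisc n) hg hb _).1
      (List.nodup_cons.1 hnd).1
      (weight_mul_norm_mderiv_le hg hb hM j L (List.nodup_cons.1 hnd).2) hz

lemma weight_mul_norm_pderivAt_le_sumBlochExpr (f : (Fin n → ℂ) → ℂ) (hz : z ∈ polydisc n)
    (j : Fin n) : (1 - ‖z j‖ ^ 2) * ‖pderivAt n j f z‖ ≤ sumBlochExpr n f z := by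
  have hterm : ∀ k ∈ Finset.univ, 0 ≤ (1 - ‖z k‖ ^ 2) * ‖pderivAt n k f z‖ := fun k _ =>
    mul_nonneg (one_sub_norm_sq_pos_of_mem_polydisc hz k).le (norm_nonneg _)
  have := Finset.single_le_sum hterm (Finset.mem_univ j)
  unfold sumBlochExpr
  linarith [norm_nonneg (f 0)]

end Polydisc

/-- Mixed-derivative estimate for functions of the sum Bloch space:
`(∏_{k∈J}(1-|z_k|²))·|∂_J f(z)| ≲ ‖f‖_𝔹`. -/
theorem sum_bloch_mixed_derivative_estimate (n : ℕ) (J : Finset (Fin n)) (hJ : J ≠ ∅) :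
    ∃ C : ℝ, 0 < C ∧
      ∀ f : (Fin n → ℂ) → ℂ, DifferentiableOn ℂ f (polydisc n) →
        ∀ B : ℝ, (∀ z ∈ polydisc n, sumBlochExpr n f z ≤ B) →
          ∀ z ∈ polydisc n,
            (∏ k ∈ J, (1 - ‖z k‖ ^ 2)) *
              ‖mderiv n J.toList f z‖ ≤ C * B := by
  obtain ⟨i, L, hJL⟩ := List.exists_cons_of_ne_nil (Finset.toList_eq_nil.not.2 hJ)
  refine ⟨4 ^ L.length, by positivity, fun f hf B hB z hz => ?_⟩
  have hM : ∀ j, ∀ y ∈ polydisc n, (1 - ‖y j‖ ^ 2) * ‖pderivAt n j f y‖ ≤ B := fun j y hy =>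
    (weight_mul_norm_pderivAt_le_sumBlochExpr f hy j).trans (hB y hy)
  have key := weight_mul_norm_mderiv_le (hf.separatelyHolomorphicOn (isOpen_polydisc n))
    (hf.continuousOn.locallyBoundedOn (isOpen_polydisc n)) hM i L (hJL ▸ J.nodup_toList) z hz
  rwa [← hJL, polydiscWeight, Finset.prod_map_toList] at key
end
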